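/- Let R be a symmetric positive definite k×k real matrix, let i₀ ∈ {1,…,k}, and for each i ≠ i₀ let A_i ⊆ ℝ be a Borel set. Then the function λ ↦ ∫_{ℝ^k} 1_{(−∞,−λ)}(x_{i₀}) · ∏_{i≠i₀} 1_{A_i}(x_i) · φ_R(x) dx is differentiable on ℝ, with derivative at λ equal to −∫_{ℝ^{k−1}} ∏_{i≠i₀} 1_{A_i}(x_i) · φ_R(x₁,…,x_{i₀−1}, −λ, x_{i₀+1},…,x_k) dx̄, where dx̄ denotes integration over the coordinates (x_i)_{i≠i₀}. -/

import Mathlib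

/-!
Splitting off the coordinate `x i₀` and applying Fubini writes the integral as `∫_{t < -λ} G t`,
where `G t` integrates the weighted density over the hyperplane `x i₀ = t`. The fundamental
theorem of calculus then gives the derivative `-G (-λ)`, provided `G` is integrable and continuous.
Both follow from a Gaussian bound `φ_R x ≤ C exp (-c ∑ xᵢ²)`, with `c > 0` a lower bound of the
spectrum of `R⁻¹`: it dominates every slice by an integrable function of the remaining
coordinates, uniformly in `t`.
-/

open MeasureTheory Real Matrix

/-- The centered Gaussian density on `ℝ^k` with covariance matrix `R`:
`φ_R(x) = ((2π)^k det R)^{-1/2} exp(−(1/2) xᵀ R⁻¹ x)`. -/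
noncomputable def gaussDensity {k : ℕ} (R : Matrix (Fin k) (Fin k) ℝ) (x : Fin k → ℝ) : ℝ :=
  (Real.sqrt ((2 * Real.pi) ^ k * R.det))⁻¹ * Real.exp (-(1 / 2) * (x ⬝ᵥ R⁻¹ *ᵥ x))

open Set

open scoped MatrixOrder in
theorem Matrix.PosDef.exists_pos_mul_dotProduct_self_le {n : Type*} [Fintype n] [DecidableEq n]
    [Nonempty n] {M : Matrix n n ℝ} (hM : M.PosDef) :
    ∃ c > 0, ∀ x : n → ℝ, c * (x ⬝ᵥ x) ≤ x ⬝ᵥ M *ᵥ x := by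
  obtain ⟨c, hc, hcM⟩ : ∃ c > 0, algebraMap ℝ (Matrix n n ℝ) c ≤ M :=
    (CFC.exists_pos_algebraMap_le_iff hM.isStrictlyPositive.isSelfAdjoint).2
      fun _ hx ↦ hM.isStrictlyPositive.spectrum_pos hx
  refine ⟨c, hc, fun x ↦ ?_⟩
  have := (Matrix.le_iff.1 hcM).dotProduct_mulVec_nonneg x
  simpa [Algebra.algebraMap_eq_smul_one, sub_mulVec, smul_mulVec, dotProduct_sub] using this

theorem integrable_exp_neg_mul_sum_sq {ι : Type*} [Fintype ι] {b : ℝ} (hb : 0 < b) :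
    Integrable fun x : ι → ℝ ↦ exp (-b * ∑ i, x i ^ 2) := by
  rw [volume_pi]
  simpa only [Finset.mul_sum, ← Real.exp_sum] using
    Integrable.fintype_prod (f := fun _ t ↦ exp (-b * t ^ 2)) fun _ ↦ integrable_exp_neg_mul_sq hb

theorem hasDerivAt_integral_Iio {E : Type*} [NormedAddCommGroup E] [NormedSpace ℝ E]
    [CompleteSpace E] {G : ℝ → E} (hG : Integrable G) {a : ℝ} (ha : ContinuousAt G a) :
    HasDerivAt (fun b ↦ ∫ t in Iio b, G t) (G a) a := by
  have hsplit : (fun b ↦ ∫ t in Iio b, G t) = fun b ↦ (∫ t in Iic 0, G t) + ∫ t in 0..b, G t := by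
    funext b
    rw [setIntegral_congr_set Iio_ae_eq_Iic,
      ← intervalIntegral.integral_Iic_sub_Iic hG.integrableOn hG.integrableOn]
    abel
  rw [hsplit]
  exact (intervalIntegral.integral_hasDerivAt_right hG.intervalIntegrable
    hG.aestronglyMeasurable.stronglyMeasurableAtFilter ha).const_add _

namespace MeasurableEquiv

variable {ι : Type*} [DecidableEq ι] (i : ι) (α : Type*)

def funSplitAt [MeasurableSpace α] : (ι → α) ≃ᵐ α × ({j // j ≠ i} → α) where
  toEquiv := Equiv.funSplitAt i α
  measurable_toFun :=
    (measurable_pi_apply i).prodMk (measurable_pi_lambda _ fun j ↦ measurable_pi_apply (j : ι))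
  measurable_invFun := measurable_pi_lambda _ fun j ↦ by
    by_cases h : j = i
    · subst h; simpa [Equiv.funSplitAt_symm_apply] using measurable_fst
    · simp only [Equiv.funSplitAt_symm_apply, dif_neg h]; fun_prop

variable [MeasurableSpace α] (p : α × ({j // j ≠ i} → α))

theorem funSplitAt_symm_apply :
    (funSplitAt i α).symm p = fun j ↦ if h : j = i then p.1 else p.2 ⟨j, h⟩ := by
  funext j; exact Equiv.funSplitAt_symm_apply i α p j

@[simp]
theorem funSplitAt_symm_apply_self : (funSplitAt i α).symm p i = p.1 := by
  simp [funSplitAt_symm_apply]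

@[simp]
theorem funSplitAt_symm_apply_coe (j : {j // j ≠ i}) : (funSplitAt i α).symm p j = p.2 j := by
  simp [funSplitAt_symm_apply, j.2]

end MeasurableEquiv

theorem MeasurableEquiv.volume_preserving_funSplitAt {ι : Type*} [Fintype ι] [DecidableEq ι]
    (i : ι) (α : Type*) [MeasureSpace α] [SigmaFinite (volume : Measure α)] :
    MeasurePreserving (funSplitAt i α) := by
  have h := volume_preserving_piEquivPiSubtypeProd (fun _ ↦ α) (· = i)
  rw [Measure.volume_eq_prod] at h
  exact ((volume_preserving_funUnique {j // j = i} α).prod (MeasurePreserving.id volume)).comp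
    (by convert h)

section Slicing

variable {ι α E : Type*} [Fintype ι] [DecidableEq ι] [MeasureSpace α]
  [SigmaFinite (volume : Measure α)] [NormedAddCommGroup E] {h : (ι → α) → E}

theorem MeasureTheory.Integrable.comp_funSplitAt_symm (i₀ : ι) (hh : Integrable h) :
    Integrable fun p ↦ h ((MeasurableEquiv.funSplitAt i₀ α).symm p) :=
  ((MeasurableEquiv.volume_preserving_funSplitAt i₀ α).symm _).integrable_comp_emb
    (MeasurableEquiv.measurableEmbedding _) |>.mpr hh

variable [NormedSpace ℝ E]

theorem MeasureTheory.Integrable.integral_funSplitAt_symm (i₀ : ι) (hh : Integrable h) :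
    Integrable fun t ↦ ∫ y, h ((MeasurableEquiv.funSplitAt i₀ α).symm (t, y)) :=
  (hh.comp_funSplitAt_symm i₀).integral_prod_left

theorem setIntegral_eval_preimage_eq_setIntegral_integral (i₀ : ι) (hh : Integrable h)
    (s : Set α) :
    ∫ x in Function.eval i₀ ⁻¹' s, h x =
      ∫ t in s, ∫ y, h ((MeasurableEquiv.funSplitAt i₀ α).symm (t, y)) := by
  set e := MeasurableEquiv.funSplitAt i₀ α
  have hpre : Function.eval i₀ ⁻¹' s = e ⁻¹' (s ×ˢ univ) := by
    ext x; exact ⟨fun hx ↦ ⟨hx, trivial⟩, And.left⟩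
  calc ∫ x in Function.eval i₀ ⁻¹' s, h x
      = ∫ x in e ⁻¹' (s ×ˢ univ), h (e.symm (e x)) := by simp only [hpre, e.symm_apply_apply]
    _ = ∫ p in s ×ˢ univ, h (e.symm p) :=
        (MeasurableEquiv.volume_preserving_funSplitAt i₀ α).setIntegral_preimage_emb
          e.measurableEmbedding (fun p ↦ h (e.symm p)) (s ×ˢ univ)
    _ = _ := by
        rw [Measure.volume_eq_prod, setIntegral_prod _ (hh.comp_funSplitAt_symm i₀).integrableOn]
        simp only [Measure.restrict_univ]
        rfl

end Slicing

theorem gaussDensity_nonneg {k : ℕ} (R : Matrix (Fin k) (Fin k) ℝ) (x : Fin k → ℝ) :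
    0 ≤ gaussDensity R x := by
  unfold gaussDensity; positivity

theorem continuous_gaussDensity {k : ℕ} (R : Matrix (Fin k) (Fin k) ℝ) :
    Continuous (gaussDensity R) := by
  unfold gaussDensity; fun_prop

namespace Matrix.PosDef

variable {k : ℕ} {R : Matrix (Fin k) (Fin k) ℝ}

theorem exists_gaussDensity_le [NeZero k] (hR : R.PosDef) :
    ∃ C c : ℝ, 0 ≤ C ∧ 0 < c ∧ ∀ x, gaussDensity R x ≤ C * exp (-c * ∑ i, x i ^ 2) := by
  obtain ⟨c, hc, hcR⟩ := hR.inv.exists_pos_mul_dotProduct_self_le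
  refine ⟨(√((2 * π) ^ k * R.det))⁻¹, c / 2, by positivity, half_pos hc, fun x ↦ ?_⟩
  have hsq : x ⬝ᵥ x = ∑ i, x i ^ 2 := by simp only [dotProduct, sq]
  have := hsq ▸ hcR x
  unfold gaussDensity
  gcongr ?_ * exp ?_
  linarith

theorem integrable_gaussDensity [NeZero k] (hR : R.PosDef) : Integrable (gaussDensity R) := by
  obtain ⟨C, c, -, hc, hle⟩ := hR.exists_gaussDensity_le
  refine ((integrable_exp_neg_mul_sum_sq hc).const_mul C).mono'
    (continuous_gaussDensity R).aestronglyMeasurable (.of_forall fun x ↦ ?_)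
  rw [Real.norm_of_nonneg (gaussDensity_nonneg R x)]
  exact hle x

theorem exists_integrable_gaussDensity_funSplitAt_symm_le (hR : R.PosDef) (i₀ : Fin k) :
    ∃ g : ({i // i ≠ i₀} → ℝ) → ℝ, Integrable g ∧
      ∀ t y, gaussDensity R ((MeasurableEquiv.funSplitAt i₀ ℝ).symm (t, y)) ≤ g y := by
  have := NeZero.of_pos i₀.pos
  obtain ⟨C, c, hC, hc, hle⟩ := hR.exists_gaussDensity_le
  refine ⟨fun y ↦ C * exp (-c * ∑ j, y j ^ 2), (integrable_exp_neg_mul_sum_sq hc).const_mul C,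
    fun t y ↦ (hle _).trans ?_⟩
  rw [Fintype.sum_eq_add_sum_subtype_ne _ i₀]
  simp only [MeasurableEquiv.funSplitAt_symm_apply_self, MeasurableEquiv.funSplitAt_symm_apply_coe]
  gcongr C * exp ?_
  nlinarith [mul_nonneg hc.le (sq_nonneg t)]

theorem continuous_integral_mul_gaussDensity_funSplitAt_symm (hR : R.PosDef) (i₀ : Fin k)
    {w : ({i // i ≠ i₀} → ℝ) → ℝ} (hw : Measurable w) (hw1 : ∀ y, ‖w y‖ ≤ 1) :
    Continuous fun t ↦
      ∫ y, w y * gaussDensity R ((MeasurableEquiv.funSplitAt i₀ ℝ).symm (t, y)) := by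
  obtain ⟨g, hg, hle⟩ := hR.exists_integrable_gaussDensity_funSplitAt_symm_le i₀
  have hslice : ∀ y, Continuous fun t ↦ (MeasurableEquiv.funSplitAt i₀ ℝ).symm (t, y) := fun y ↦
    (Homeomorph.funSplitAt ℝ i₀).symm.continuous.comp (Continuous.prodMk_left y)
  refine continuous_of_dominated (bound := g) (fun t ↦ ?_) (fun t ↦ .of_forall fun y ↦ ?_) hg
    (.of_forall fun y ↦ continuous_const.mul ((continuous_gaussDensity R).comp (hslice y)))
  · exact (hw.mul ((continuous_gaussDensity R).measurable.comp
      ((MeasurableEquiv.measurable _).comp measurable_prodMk_left))).aestronglyMeasurable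
  · rw [norm_mul, Real.norm_of_nonneg (gaussDensity_nonneg _ _)]
    exact (mul_le_of_le_one_left (gaussDensity_nonneg _ _) (hw1 y)).trans (hle t y)

theorem hasDerivAt_setIntegral_lt_neg_mul_gaussDensity (hR : R.PosDef) (i₀ : Fin k)
    {w : ({i // i ≠ i₀} → ℝ) → ℝ} (hw : Measurable w) (hw1 : ∀ y, ‖w y‖ ≤ 1) (l : ℝ) :
    HasDerivAt (fun l ↦ ∫ x in Function.eval i₀ ⁻¹' Iio (-l),
        w (MeasurableEquiv.funSplitAt i₀ ℝ x).2 * gaussDensity R x)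
      (-∫ y, w y * gaussDensity R ((MeasurableEquiv.funSplitAt i₀ ℝ).symm (-l, y))) l := by
  have := NeZero.of_pos i₀.pos
  have hh : Integrable fun x ↦ w (MeasurableEquiv.funSplitAt i₀ ℝ x).2 * gaussDensity R x :=
    hR.integrable_gaussDensity.bdd_mul
      (hw.comp (measurable_snd.comp (MeasurableEquiv.measurable _))).aestronglyMeasurable
      (.of_forall fun x ↦ hw1 _)
  have hslice := setIntegral_eval_preimage_eq_setIntegral_integral i₀ hh
  have hG := hh.integral_funSplitAt_symm i₀
  simp only [MeasurableEquiv.apply_symm_apply] at hslice hG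
  simp only [hslice]
  simpa [Function.comp_def] using (hasDerivAt_integral_Iio hG
    (hR.continuous_integral_mul_gaussDensity_funSplitAt_symm i₀ hw hw1).continuousAt).scomp l
    (hasDerivAt_neg l)

end Matrix.PosDef

theorem stmt8_general (k : ℕ) (R : Matrix (Fin k) (Fin k) ℝ) (hpd : R.PosDef)
    (i₀ : Fin k) (A : Fin k → Set ℝ) (hA : ∀ i, MeasurableSet (A i)) (l : ℝ) :
    HasDerivAt
      (fun l : ℝ =>
        ∫ x : Fin k → ℝ,
          Set.indicator (Set.Iio (-l)) (fun _ => (1 : ℝ)) (x i₀) *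
            (∏ i ∈ Finset.univ.erase i₀, Set.indicator (A i) (fun _ => (1 : ℝ)) (x i)) *
            gaussDensity R x)
      (-(∫ xb : {i : Fin k // i ≠ i₀} → ℝ,
          (∏ i : {i : Fin k // i ≠ i₀}, Set.indicator (A i) (fun _ => (1 : ℝ)) (xb i)) *
            gaussDensity R (fun i => if h : i = i₀ then -l else xb ⟨i, h⟩)))
      l := by
  set P : ({i // i ≠ i₀} → ℝ) → ℝ := fun y ↦ ∏ i : {i // i ≠ i₀}, (A i).indicator (fun _ ↦ 1) (y i)
  have hPm : Measurable P := Finset.measurable_prod _ fun i _ ↦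
    (measurable_const.indicator (hA i)).comp (measurable_pi_apply i)
  have hP1 (y) : ‖P y‖ ≤ 1 := by
    rw [norm_prod]
    exact Finset.prod_le_one (fun _ _ ↦ norm_nonneg _) fun i _ ↦
      (norm_indicator_le_norm_self _ _).trans norm_one.le
  have hprod (x : Fin k → ℝ) : ∏ i ∈ Finset.univ.erase i₀, (A i).indicator (fun _ ↦ 1) (x i) =
      P (MeasurableEquiv.funSplitAt i₀ ℝ x).2 :=
    Finset.prod_subtype _ (fun i ↦ by simp) _
  have hF (l : ℝ) : (∫ x, (Iio (-l)).indicator (fun _ ↦ 1) (x i₀) *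
      (∏ i ∈ Finset.univ.erase i₀, (A i).indicator (fun _ ↦ 1) (x i)) * gaussDensity R x) =
      ∫ x in Function.eval i₀ ⁻¹' Iio (-l),
        P (MeasurableEquiv.funSplitAt i₀ ℝ x).2 * gaussDensity R x := by
    rw [← integral_indicator (measurable_pi_apply i₀ measurableSet_Iio)]
    congr 1 with x
    by_cases hx : x i₀ < -l <;> simp [hx, hprod]
  simp only [hF]
  simpa only [MeasurableEquiv.funSplitAt_symm_apply] using
    hpd.hasDerivAt_setIntegral_lt_neg_mul_gaussDensity i₀ hPm hP1 l

/-- For a symmetric positive definite matrix `R`, an index `i₀`, and Borel sets `A_i ⊆ ℝ`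
(for `i ≠ i₀`), the function
`λ ↦ ∫_{ℝ^k} 1_{(−∞,−λ)}(x_{i₀}) ∏_{i≠i₀} 1_{A_i}(x_i) φ_R(x) dx`
is differentiable on `ℝ`, with derivative at `λ` equal to
`−∫_{ℝ^{k−1}} ∏_{i≠i₀} 1_{A_i}(x_i) φ_R(x₁,…,−λ,…,x_k) dx̄`. -/
theorem stmt8 (k : ℕ) (R : Matrix (Fin k) (Fin k) ℝ) (hsymm : R.IsSymm) (hpd : R.PosDef)
    (i₀ : Fin k) (A : Fin k → Set ℝ) (hA : ∀ i, MeasurableSet (A i)) (l : ℝ) :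
    HasDerivAt
      (fun l : ℝ =>
        ∫ x : Fin k → ℝ,
          Set.indicator (Set.Iio (-l)) (fun _ => (1 : ℝ)) (x i₀) *
            (∏ i ∈ Finset.univ.erase i₀, Set.indicator (A i) (fun _ => (1 : ℝ)) (x i)) *
            gaussDensity R x)
      (-(∫ xb : {i : Fin k // i ≠ i₀} → ℝ,
          (∏ i : {i : Fin k // i ≠ i₀}, Set.indicator (A i) (fun _ => (1 : ℝ)) (xb i)) *
            gaussDensity R (fun i => if h : i = i₀ then -l else xb ⟨i, h⟩)))
      l :=
  stmt8_general k R hpd i₀ A hA l
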